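/- Let R be a complete Noetherian local ring with maximal ideal 𝔪 and finite residue field, X an infinite set, ℱ a non-principal ultrafilter on X, and (M_α)_{α∈X} a bounded family of R-modules, say with each M_α a quotient of R^s. Then the patching module Patch_R((M_α)) is a finitely generated R-module; indeed it is a quotient of R^s. -/

import Mathlib

/-!
Every level of the patching module is a quotient of `(R/𝔪ⁿ)ˢ`: lift an element of the ultraproduct
coordinatewise through the surjections `Rˢ → M α`; since `(R/𝔪ⁿ)ˢ` is finite, the lifts agree
along `ℱ`. The fibres of these level maps are finite and nonempty, so König's lemma gives a
compatible system of lifts through all levels, which comes from a single element of `Rˢ` because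
`Rˢ` is `𝔪`-adically complete.
-/

open Filter IsLocalRing

section Ultra

variable {X : Type*} (ℱ : Ultrafilter X) (A : Type*) [Ring A]

/-- The submodule of families vanishing on a set of the ultrafilter. -/
def ultraZero (M : X → Type*) [∀ α, AddCommGroup (M α)] [∀ α, Module A (M α)] :
    Submodule A (∀ α, M α) where
  carrier := {x | ∀ᶠ α in (ℱ : Filter X), x α = 0}
  add_mem' := by
    intro a b ha hb
    filter_upwards [ha, hb] with α h1 h2
    simp [h1, h2]
  zero_mem' := Filter.Eventually.of_forall fun _ => rfl
  smul_mem' := by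
    intro c x hx
    filter_upwards [hx] with α h
    simp [h]

lemma mem_ultraZero {M : X → Type*} [∀ α, AddCommGroup (M α)] [∀ α, Module A (M α)]
    {x : ∀ α, M α} :
    x ∈ ultraZero ℱ A M ↔ ∀ᶠ α in (ℱ : Filter X), x α = 0 := Iff.rfl

/-- The ultraproduct of a family of `A`-modules along the ultrafilter `ℱ`. -/
abbrev Ultraproduct (M : X → Type*) [∀ α, AddCommGroup (M α)] [∀ α, Module A (M α)] :=
  (∀ α, M α) ⧸ ultraZero ℱ A M

/-- The map induced on ultraproducts by a family of linear maps. -/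
def ultraMap {M N : X → Type*} [∀ α, AddCommGroup (M α)] [∀ α, Module A (M α)]
    [∀ α, AddCommGroup (N α)] [∀ α, Module A (N α)] (f : ∀ α, M α →ₗ[A] N α) :
    Ultraproduct ℱ A M →ₗ[A] Ultraproduct ℱ A N :=
  Submodule.mapQ _ _ (LinearMap.pi fun α => (f α).comp (LinearMap.proj α)) <| by
    intro x hx
    simp only [Submodule.mem_comap]
    rw [mem_ultraZero]
    filter_upwards [hx] with α h
    simp [h]

lemma ultraMap_mk {M N : X → Type*} [∀ α, AddCommGroup (M α)] [∀ α, Module A (M α)]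
    [∀ α, AddCommGroup (N α)] [∀ α, Module A (N α)] (f : ∀ α, M α →ₗ[A] N α)
    (x : ∀ α, M α) :
    ultraMap ℱ A f (Submodule.Quotient.mk x) =
      Submodule.Quotient.mk (fun α => f α (x α)) := by
  simp [ultraMap, Submodule.mapQ_apply]
  rfl

end Ultra

section SeqLimit

variable (R : Type*) [CommRing R]

/-- The inverse limit of a sequence of modules, realised as a submodule of the product. -/
def seqLimit (P : ℕ → Type*) [∀ n, AddCommGroup (P n)] [∀ n, Module R (P n)]
    (g : ∀ n, P (n + 1) →ₗ[R] P n) : Submodule R (∀ n, P n) where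
  carrier := {x | ∀ n, g n (x (n + 1)) = x n}
  add_mem' := by
    intro a b ha hb n
    simp [ha n, hb n]
  zero_mem' := by intro n; simp
  smul_mem' := by
    intro c x hx n
    simp [hx n]

end SeqLimit

section Patch

variable (R : Type*) [CommRing R] [IsLocalRing R]

/-- The submodule 𝔪ⁿ•M of a module M. -/
abbrev mPow (n : ℕ) (M : Type*) [AddCommGroup M] [Module R M] : Submodule R M :=
  (maximalIdeal R ^ n) • (⊤ : Submodule R M)

/-- The quotient M/𝔪ⁿM. -/
abbrev ModQuot (n : ℕ) (M : Type*) [AddCommGroup M] [Module R M] :=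
  M ⧸ mPow R n M

lemma mPow_succ_le (n : ℕ) (M : Type*) [AddCommGroup M] [Module R M] :
    mPow R (n + 1) M ≤ mPow R n M :=
  Submodule.smul_mono_left (Ideal.pow_le_pow_right n.le_succ)

/-- The reduction map M/𝔪ⁿ⁺¹M → M/𝔪ⁿM. -/
def quotTrans (n : ℕ) (M : Type*) [AddCommGroup M] [Module R M] :
    ModQuot R (n + 1) M →ₗ[R] ModQuot R n M :=
  Submodule.mapQ _ _ LinearMap.id <| by
    intro x hx
    simpa using mPow_succ_le R n M hx

lemma quotTrans_mk (n : ℕ) (M : Type*) [AddCommGroup M] [Module R M] (x : M) :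
    quotTrans R n M (Submodule.Quotient.mk x) = Submodule.Quotient.mk x := by
  simp [quotTrans, Submodule.mapQ_apply]

variable {X : Type*} (ℱ : Ultrafilter X)

/-- The n-th level of the patching construction: the ultraproduct of the quotients M α/𝔪ⁿ. -/
abbrev UP (M : X → Type*) [∀ α, AddCommGroup (M α)] [∀ α, Module R (M α)] (n : ℕ) :=
  Ultraproduct ℱ R (fun α => ModQuot R n (M α))

/-- The transition maps between the levels of the patching construction. -/
def upTrans (M : X → Type*) [∀ α, AddCommGroup (M α)] [∀ α, Module R (M α)] (n : ℕ) :
    UP R ℱ M (n + 1) →ₗ[R] UP R ℱ M n :=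
  ultraMap ℱ R (fun α => quotTrans R n (M α))

/-- The patching module of a family of R-modules: the inverse limit over n of the
ultraproducts of the quotients M α/𝔪ⁿ. -/
def PatchS (M : X → Type*) [∀ α, AddCommGroup (M α)] [∀ α, Module R (M α)] :
    Submodule R (∀ n, UP R ℱ M n) :=
  seqLimit R (fun n => UP R ℱ M n) (fun n => upTrans R ℱ M n)

lemma mem_PatchS {M : X → Type*} [∀ α, AddCommGroup (M α)] [∀ α, Module R (M α)]
    {x : ∀ n, UP R ℱ M n} :
    x ∈ PatchS R ℱ M ↔ ∀ n, upTrans R ℱ M n (x (n + 1)) = x n := Iff.rfl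

-- functoriality of ModQuot
lemma mapQ_cond {M N : Type*} [AddCommGroup M] [Module R M] [AddCommGroup N] [Module R N]
    (f : M →ₗ[R] N) (n : ℕ) : mPow R n M ≤ (mPow R n N).comap f := by
  rw [← Submodule.map_le_iff_le_comap, Submodule.map_smul'']
  exact Submodule.smul_mono le_rfl le_top

/-- The map induced by f : M →ₗ N on the quotients modulo 𝔪ⁿ. -/
def modQuotMap (n : ℕ) {M N : Type*} [AddCommGroup M] [Module R M] [AddCommGroup N]
    [Module R N] (f : M →ₗ[R] N) : ModQuot R n M →ₗ[R] ModQuot R n N :=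
  Submodule.mapQ _ _ f (mapQ_cond R f n)

lemma modQuotMap_mk (n : ℕ) {M N : Type*} [AddCommGroup M] [Module R M] [AddCommGroup N]
    [Module R N] (f : M →ₗ[R] N) (x : M) :
    modQuotMap R n f (Submodule.Quotient.mk x) = Submodule.Quotient.mk (f x) := by
  simp [modQuotMap, Submodule.mapQ_apply]

lemma quotTrans_modQuotMap {M N : Type*} [AddCommGroup M] [Module R M] [AddCommGroup N]
    [Module R N] (f : M →ₗ[R] N) (n : ℕ) (q : ModQuot R (n + 1) M) :
    quotTrans R n N (modQuotMap R (n + 1) f q) = modQuotMap R n f (quotTrans R n M q) := by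
  obtain ⟨z, rfl⟩ := Submodule.Quotient.mk_surjective _ q
  rw [modQuotMap_mk, quotTrans_mk, quotTrans_mk, modQuotMap_mk]

lemma level_compat {M N : X → Type*} [∀ α, AddCommGroup (M α)] [∀ α, Module R (M α)]
    [∀ α, AddCommGroup (N α)] [∀ α, Module R (N α)] (f : ∀ α, M α →ₗ[R] N α) (n : ℕ)
    (u : UP R ℱ M (n + 1)) :
    upTrans R ℱ N n (ultraMap ℱ R (fun α => modQuotMap R (n + 1) (f α)) u) =
      ultraMap ℱ R (fun α => modQuotMap R n (f α)) (upTrans R ℱ M n u) := by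
  obtain ⟨y, rfl⟩ := Submodule.Quotient.mk_surjective _ u
  simp only [upTrans]
  rw [ultraMap_mk, ultraMap_mk, ultraMap_mk, ultraMap_mk]
  exact congrArg _ (funext fun α => quotTrans_modQuotMap R (f α) n (y α))

/-- The map induced on patching modules by a family of linear maps. -/
def patchMap {M N : X → Type*} [∀ α, AddCommGroup (M α)] [∀ α, Module R (M α)]
    [∀ α, AddCommGroup (N α)] [∀ α, Module R (N α)] (f : ∀ α, M α →ₗ[R] N α) :
    ↥(PatchS R ℱ M) →ₗ[R] ↥(PatchS R ℱ N) :=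
  LinearMap.codRestrict _
    ((LinearMap.pi fun n =>
        (ultraMap ℱ R fun α => modQuotMap R n (f α)).comp (LinearMap.proj n)).comp
      (PatchS R ℱ M).subtype)
    (by
      intro x
      rw [mem_PatchS]
      intro n
      simp only [LinearMap.comp_apply, LinearMap.pi_apply, LinearMap.proj_apply,
        Submodule.subtype_apply]
      rw [level_compat, x.2 n])

end Patch

open CategoryTheory in
lemma exists_compatible_seq_of_finite {T : ℕ → Type*} [∀ n, Finite (T n)] [∀ n, Nonempty (T n)]
    (g : ∀ n, T (n + 1) → T n) : ∃ x : ∀ n, T n, ∀ n, g n (x (n + 1)) = x n := by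
  let F : ℕᵒᵖ ⥤ Type _ := Functor.ofOpSequence (X := T) fun n => TypeCat.ofHom (g n)
  have : ∀ j : ℕᵒᵖ, Finite (F.obj j) := fun j => inferInstanceAs (Finite (T j.unop))
  have : ∀ j : ℕᵒᵖ, Nonempty (F.obj j) := fun j => inferInstanceAs (Nonempty (T j.unop))
  obtain ⟨u, hu⟩ := nonempty_sections_of_finite_inverse_system F
  refine ⟨fun n => u (Opposite.op n), fun n => ?_⟩
  have := hu (homOfLE (Nat.le_add_right n 1)).op
  rwa [Functor.ofOpSequence_map_homOfLE_succ] at this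

lemma exists_compatible_lift_of_finite {T U : ℕ → Type*} [∀ n, Finite (T n)]
    (gT : ∀ n, T (n + 1) → T n) (gU : ∀ n, U (n + 1) → U n) (φ : ∀ n, T n → U n)
    (hφ : ∀ n, Function.Surjective (φ n)) (hcomm : ∀ n t, φ n (gT n t) = gU n (φ (n + 1) t))
    (u : ∀ n, U n) (hu : ∀ n, gU n (u (n + 1)) = u n) :
    ∃ t : ∀ n, T n, (∀ n, gT n (t (n + 1)) = t n) ∧ ∀ n, φ n (t n) = u n := by
  have : ∀ n, Nonempty {t : T n // φ n t = u n} := fun n =>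
    let ⟨t, ht⟩ := hφ n (u n); ⟨⟨t, ht⟩⟩
  obtain ⟨t, ht⟩ := exists_compatible_seq_of_finite (T := fun n => {t : T n // φ n t = u n})
    fun n t => ⟨gT n t, by rw [hcomm, t.2, hu]⟩
  exact ⟨fun n => t n, fun n => congrArg Subtype.val (ht n), fun n => (t n).2⟩

lemma Ultrafilter.exists_eventually_eq_of_finite {X F : Type*} [Finite F] (ℱ : Ultrafilter X)
    (g : X → F) : ∃ c, ∀ᶠ α in (ℱ : Filter X), g α = c := by
  obtain ⟨c, hc⟩ := (ℱ.map g).eq_pure_of_finite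
  exact ⟨c, Ultrafilter.mem_map.1 (hc ▸ Ultrafilter.mem_pure.2 rfl : {c} ∈ ℱ.map g)⟩

lemma Submodule.mem_smul_top_pi_iff {R ι : Type*} [CommRing R] [Finite ι] (I : Ideal R)
    {M : ι → Type*} [∀ i, AddCommGroup (M i)] [∀ i, Module R (M i)] {y : ∀ i, M i} :
    y ∈ I • (⊤ : Submodule R (∀ i, M i)) ↔ ∀ i, y i ∈ I • (⊤ : Submodule R (M i)) := by
  classical
  have := Fintype.ofFinite ι
  refine ⟨fun hy i => smul_top_le_comap_smul_top I (LinearMap.proj i) hy, fun hy => ?_⟩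
  rw [← Finset.univ_sum_single y]
  exact sum_mem fun i _ => smul_top_le_comap_smul_top I (LinearMap.single R M i) (hy i)

instance IsPrecomplete.pi {R ι : Type*} [CommRing R] [Finite ι] (I : Ideal R) (M : ι → Type*)
    [∀ i, AddCommGroup (M i)] [∀ i, Module R (M i)] [∀ i, IsPrecomplete I (M i)] :
    IsPrecomplete I (∀ i, M i) where
  prec' f hf := by
    simp only [SModEq.sub_mem, Submodule.mem_smul_top_pi_iff] at hf ⊢
    choose L hL using fun i => (inferInstance : IsPrecomplete I (M i)).prec (f := (f · i))
      fun hmn => SModEq.sub_mem.2 (hf hmn i)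
    exact ⟨L, fun n i => SModEq.sub_mem.1 (hL i n)⟩

section Lifting

variable {R : Type*} [CommRing R] [IsLocalRing R]

lemma finite_modQuot [IsNoetherianRing R] [Finite (ResidueField R)] (n : ℕ) (N : Type*)
    [AddCommGroup N] [Module R N] [Module.Finite R N] : Finite (ModQuot R n N) := by
  have : Finite (R ⧸ maximalIdeal R) := inferInstanceAs (Finite (ResidueField R))
  have : Finite (R ⧸ maximalIdeal R ^ n) :=
    Ideal.finite_quotient_pow (IsNoetherian.noetherian _) n
  have : Module.Finite (R ⧸ maximalIdeal R ^ n) (ModQuot R n N) :=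
    Module.Finite.of_restrictScalars_finite R _ _
  exact Module.finite_of_finite (R ⧸ maximalIdeal R ^ n)

lemma exists_mk_eq_of_isPrecomplete {N : Type*} [AddCommGroup N] [Module R N]
    [IsPrecomplete (maximalIdeal R) N] (d : ∀ n, ModQuot R n N)
    (hd : ∀ n, quotTrans R n N (d (n + 1)) = d n) :
    ∃ x : N, ∀ n, Submodule.Quotient.mk x = d n := by
  choose w hw using fun n => Submodule.Quotient.mk_surjective _ (d n)
  have hstep : ∀ n, w n ≡ w (n + 1) [SMOD mPow R n N] := fun n => by
    rw [SModEq, ← quotTrans_mk R n N (w (n + 1)), hw, hw, hd]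
  obtain ⟨L, hL⟩ := IsPrecomplete.prec ‹_› (f := w) fun {m n} hmn => by
    induction n, hmn using Nat.le_induction with
    | base => rfl
    | succ n hmn ih =>
      exact ih.trans ((hstep n).mono (Submodule.smul_mono_left (Ideal.pow_le_pow_right hmn)))
  exact ⟨L, fun n => Eq.trans (Eq.symm (hL n)) (hw n)⟩

variable {X : Type*} (ℱ : Ultrafilter X) {M : X → Type*} [∀ α, AddCommGroup (M α)]
  [∀ α, Module R (M α)] {N : Type*} [AddCommGroup N] [Module R N] (f : ∀ α, N →ₗ[R] M α)

def levelMap (n : ℕ) : ModQuot R n N →ₗ[R] UP R ℱ M n :=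
  (ultraZero ℱ R fun α => ModQuot R n (M α)).mkQ ∘ₗ LinearMap.pi fun α => modQuotMap R n (f α)

lemma levelMap_apply (n : ℕ) (q : ModQuot R n N) :
    levelMap ℱ f n q = Submodule.Quotient.mk fun α => modQuotMap R n (f α) q := rfl

lemma levelMap_quotTrans (n : ℕ) (q : ModQuot R (n + 1) N) :
    levelMap ℱ f n (quotTrans R n N q) = upTrans R ℱ M n (levelMap ℱ f (n + 1) q) := by
  rw [levelMap_apply, levelMap_apply, upTrans, ultraMap_mk]
  exact congrArg _ (funext fun α => (quotTrans_modQuotMap R (f α) n q).symm)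

lemma levelMap_surjective (hf : ∀ α, Function.Surjective (f α)) (n : ℕ)
    [Finite (ModQuot R n N)] : Function.Surjective (levelMap ℱ f n) := by
  intro u
  obtain ⟨y, rfl⟩ := Submodule.Quotient.mk_surjective _ u
  have hlift : ∀ α, ∃ q, modQuotMap R n (f α) q = y α := fun α => by
    obtain ⟨z, hz⟩ := Submodule.Quotient.mk_surjective _ (y α)
    obtain ⟨v, rfl⟩ := hf α z
    exact ⟨Submodule.Quotient.mk v, (modQuotMap_mk R n (f α) v).trans hz⟩
  choose q hq using hlift
  obtain ⟨c, hc⟩ := ℱ.exists_eventually_eq_of_finite q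
  refine ⟨c, (Submodule.Quotient.eq _).2 ?_⟩
  filter_upwards [hc] with α hα
  simp [← hα, hq]

def toPatch : N →ₗ[R] PatchS R ℱ M :=
  LinearMap.codRestrict _ (LinearMap.pi fun n => levelMap ℱ f n ∘ₗ (mPow R n N).mkQ) fun v n => by
    simp only [LinearMap.pi_apply, LinearMap.comp_apply, Submodule.mkQ_apply]
    rw [← levelMap_quotTrans, quotTrans_mk]

lemma toPatch_surjective [IsPrecomplete (maximalIdeal R) N] [∀ n, Finite (ModQuot R n N)]
    (hf : ∀ α, Function.Surjective (f α)) : Function.Surjective (toPatch ℱ f) := by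
  rintro ⟨x, hx⟩
  obtain ⟨t, ht, htx⟩ := exists_compatible_lift_of_finite (fun n => quotTrans R n N)
    (fun n => upTrans R ℱ M n) (fun n => levelMap ℱ f n) (fun n => levelMap_surjective ℱ f hf n)
    (levelMap_quotTrans ℱ f) x hx
  obtain ⟨v, hv⟩ := exists_mk_eq_of_isPrecomplete t ht
  exact ⟨v, Subtype.ext <| funext fun n => (congrArg (levelMap ℱ f n) (hv n)).trans (htx n)⟩

end Lifting

theorem patch_of_bounded_finitely_generated_general
    (R : Type*) [CommRing R] [IsLocalRing R] [IsNoetherianRing R]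
    [IsAdicComplete (IsLocalRing.maximalIdeal R) R] [Finite (IsLocalRing.ResidueField R)]
    {X : Type*} (ℱ : Ultrafilter X)
    (M : X → Type*) [∀ α, AddCommGroup (M α)] [∀ α, Module R (M α)]
    (s : ℕ) (hbdd : ∀ α, ∃ f : (Fin s → R) →ₗ[R] M α, Function.Surjective f) :
    (∃ p : (Fin s → R) →ₗ[R] ↥(PatchS R ℱ M), Function.Surjective p) ∧
      Module.Finite R ↥(PatchS R ℱ M) := by
  choose f hf using hbdd
  have (n : ℕ) := finite_modQuot (R := R) n (Fin s → R)
  have hsurj := toPatch_surjective ℱ f hf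
  exact ⟨⟨_, hsurj⟩, Module.Finite.of_surjective _ hsurj⟩

/-- The patching module of a bounded family of modules over a complete
Noetherian local ring with finite residue field is finitely generated; indeed it is a quotient
of the free module of the same rank. -/
theorem patch_of_bounded_finitely_generated
    (R : Type*) [CommRing R] [IsLocalRing R] [IsNoetherianRing R]
    [IsAdicComplete (IsLocalRing.maximalIdeal R) R] [Finite (IsLocalRing.ResidueField R)]
    {X : Type*} [Infinite X] (ℱ : Ultrafilter X) (hℱ : ∀ x : X, ℱ ≠ pure x)
    (M : X → Type*) [∀ α, AddCommGroup (M α)] [∀ α, Module R (M α)]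
    (s : ℕ) (hbdd : ∀ α, ∃ f : (Fin s → R) →ₗ[R] M α, Function.Surjective f) :
    (∃ p : (Fin s → R) →ₗ[R] ↥(PatchS R ℱ M), Function.Surjective p) ∧
      Module.Finite R ↥(PatchS R ℱ M) :=
  patch_of_bounded_finitely_generated_general R ℱ M s hbdd
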